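/- The simplified N-output mechanism satisfies ε-local differential privacy: for every output a_i and any two inputs x, x' ∈ [-1,1], Pr[a_i | x] ≤ e^ε · Pr[a_i | x'], provided 0 ≤ p_0 ≤ p. In particular, for outputs with |i| > 1 all probabilities lie in [p, e^ε p]; for i = 0 they lie in [p_0, e^ε p_0]; and for |i| = 1 it suffices that p ≤ p* ≤ e^ε p, which holds under 0 ≤ p_0 ≤ p. -/
import Mathlib


/-- The simplified N-output mechanism satisfies ε-local differential privacy. -/
theorem stmt_6 (ε : ℝ) (hε : 0 < ε) (n : ℕ) (hn : 1 ≤ n) (p p0 pstar : ℝ)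
    (hp : p = (1 - p0) / (Real.exp ε + 2 * (n : ℝ) - 1))
    (hps : pstar = (1 - 2 * ((n : ℝ) - 1) * p - Real.exp ε * p0) / 2)
    (hp0 : 0 ≤ p0) (hp0p : p0 ≤ p)
    (pr : ℤ → ℝ → ℝ)
    (hbig : ∀ i : ℤ, 1 < |i| → ∀ x ∈ Set.Icc (-1 : ℝ) 1,
      pr i x ∈ Set.Icc p (Real.exp ε * p))
    (hzero : ∀ x ∈ Set.Icc (-1 : ℝ) 1,
      pr 0 x ∈ Set.Icc p0 (Real.exp ε * p0))
    (hone : ∀ i : ℤ, |i| = 1 → ∀ x ∈ Set.Icc (-1 : ℝ) 1,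
      pr i x ∈ Set.Icc p (Real.exp ε * p) ∨ pr i x = pstar) :
    ∀ i : ℤ, ∀ x ∈ Set.Icc (-1 : ℝ) 1, ∀ x' ∈ Set.Icc (-1 : ℝ) 1,
      pr i x ≤ Real.exp ε * pr i x' := by
  have hE1 : 1 < Real.exp ε := by nlinarith [Real.add_one_le_exp ε]
  have hEpos : 0 < Real.exp ε := by linarith
  have hn1 : (1 : ℝ) ≤ (n : ℝ) := by exact_mod_cast hn
  have hD : 0 < Real.exp ε + 2 * (n : ℝ) - 1 := by linarith
  have hpD : p * (Real.exp ε + 2 * (n : ℝ) - 1) = 1 - p0 := by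
    rw [hp]; field_simp
  have hkey1 : 0 ≤ (Real.exp ε - 1) * (p - p0) :=
    mul_nonneg (by linarith) (by linarith)
  have hkey2 : 0 ≤ (Real.exp ε - 1) * (p + p0) :=
    mul_nonneg (by linarith) (by linarith)
  have hpl : p ≤ pstar := by rw [hps]; nlinarith [hpD, hkey1]
  have hpu : pstar ≤ Real.exp ε * p := by rw [hps]; nlinarith [hpD, hkey2]
  intro i x hx x' hx'
  by_cases h0 : i = 0
  · subst h0
    have h1 := hzero x hx
    have h2 := hzero x' hx'
    have := mul_le_mul_of_nonneg_left h2.1 hEpos.le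
    linarith [h1.2]
  · by_cases h1 : |i| = 1
    · have hA : pr i x ≤ Real.exp ε * p := by
        rcases hone i h1 x hx with h | h
        · exact h.2
        · rw [h]; exact hpu
      have hB : p ≤ pr i x' := by
        rcases hone i h1 x' hx' with h | h
        · exact h.1
        · rw [h]; exact hpl
      have := mul_le_mul_of_nonneg_left hB hEpos.le
      linarith
    · have hgt : 1 < |i| := lt_of_le_of_ne (Int.one_le_abs (by omega)) (Ne.symm h1)
      have hA := (hbig i hgt x hx).2
      have hB := (hbig i hgt x' hx').1
      have := mul_le_mul_of_nonneg_left hB hEpos.le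
      linarith
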